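/- arXiv:cs/0505086 — 2 statements merged into one kernel-verified Lean document; each statement's English description precedes it below -/
import Mathlib

section
/- Let T be an 𝒜-tree and let x, y be two different nodes of T. If 𝒜_T(x) = 𝒜_T(y), then there is a directed path from x to y or from y to x such that its origin and all its intermediate nodes are unlabeled and elementary (i.e., have exactly one child). -/
/-!
Common framework: rooted labeled trees ("𝒜-trees") following Llabrés–Rocha–Rosselló–Valiente.

A `PreTree α V` is the raw data of a directed graph on (a finite subset of) `V` together with
a partial labeling of its nodes by labels in `α`.  The predicate `PreTree.IsATree` asserts that
this data is a finite rooted tree (the root reaches every node by a unique directed path),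
that the labeling is injective, and that every leaf is labeled.
-/

structure PreTree (α : Type) (V : Type) where
  nodes : Set V
  arc : V → V → Prop
  label : V → Option α

namespace PreTree

variable {α V W : Type}

/-- There is a directed path from `u` to `v` (possibly trivial). -/
def path (T : PreTree α V) (u v : V) : Prop := Relation.ReflTransGen T.arc u v

/-- There is a non-trivial directed path (length ≥ 1) from `u` to `v`. -/
def pathNT (T : PreTree α V) (u v : V) : Prop := Relation.TransGen T.arc u v

/-- `𝒜(T)`: the set of labels of all nodes of `T`. -/
def labelSet (T : PreTree α V) : Set α := {a | ∃ v, T.label v = some a}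

/-- `𝒜_T(v)`: the cluster of `v`, i.e. the set of labels of all descendants of `v`
(including `v` itself). -/
def cluster (T : PreTree α V) (v : V) : Set α := {a | ∃ w, T.path v w ∧ T.label w = some a}

/-- `𝒞_𝒜(T)`: the cluster representation of `T`. -/
def clusterRep (T : PreTree α V) : Set (Set α) := {C | ∃ v ∈ T.nodes, T.cluster v = C}

/-- A leaf is a node without children. -/
def IsLeaf (T : PreTree α V) (v : V) : Prop := v ∈ T.nodes ∧ ∀ w, ¬ T.arc v w

/-- `ℒ(T)`: the set of labels of the leaves of `T`. -/
def leafLabels (T : PreTree α V) : Set α := {a | ∃ v, T.IsLeaf v ∧ T.label v = some a}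

/-- A node is elementary when it has exactly one child. -/
def IsElementary (T : PreTree α V) (v : V) : Prop := ∃! w, T.arc v w

/-- `T` is an 𝒜-tree: a finite rooted tree (every node reachable from the root by a unique
directed path, which is captured by unique parents, acyclicity and reachability from a root)
with an injective partial labeling such that every leaf is labeled. -/
structure IsATree (T : PreTree α V) : Prop where
  finite_nodes : T.nodes.Finite
  arc_mem_left : ∀ {u v : V}, T.arc u v → u ∈ T.nodes
  arc_mem_right : ∀ {u v : V}, T.arc u v → v ∈ T.nodes
  parent_unique : ∀ {u v w : V}, T.arc u w → T.arc v w → u = v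
  acyclic : ∀ {u v : V}, T.arc u v → ¬ T.path v u
  rooted : T.nodes.Nonempty → ∃ r ∈ T.nodes, ∀ v ∈ T.nodes, T.path r v
  label_mem : ∀ {v : V} {a : α}, T.label v = some a → v ∈ T.nodes
  label_inj : ∀ {u v : V} {a : α}, T.label u = some a → T.label v = some a → u = v
  leaf_labeled : ∀ v ∈ T.nodes, (∀ w, ¬ T.arc v w) → ∃ a, T.label v = some a

/-- A semi-labeled tree over `𝒜` is an 𝒜-tree all of whose elementary nodes are labeled. -/
def IsSemiLabeled (T : PreTree α V) : Prop :=
  T.IsATree ∧ ∀ v ∈ T.nodes, T.IsElementary v → ∃ a, T.label v = some a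

open Classical in
/-- The restriction `T|X`: the subtree of `T` induced on the nodes whose cluster meets `X`,
keeping exactly the labels that belong to `X`. -/
noncomputable def restrict (T : PreTree α V) (X : Set α) : PreTree α V where
  nodes := {v | v ∈ T.nodes ∧ (T.cluster v ∩ X).Nonempty}
  arc u v := T.arc u v ∧ (T.cluster u ∩ X).Nonempty ∧ (T.cluster v ∩ X).Nonempty
  label v := if (∃ a ∈ X, T.label v = some a) then T.label v else none

/-- A weak topological embedding `f : S → T`: an injective map on nodes which preserves labels
and preserves and reflects directed paths. -/
def IsWTE (S : PreTree α V) (T : PreTree α W) (f : V → W) : Prop :=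
  (∀ v ∈ S.nodes, f v ∈ T.nodes) ∧
  (∀ u ∈ S.nodes, ∀ v ∈ S.nodes, f u = f v → u = v) ∧
  (∀ (v : V) (a : α), S.label v = some a → T.label (f v) = some a) ∧
  (∀ u ∈ S.nodes, ∀ v ∈ S.nodes, (S.path u v ↔ T.path (f u) (f v)))

/-- Two 𝒜-trees are ancestrally compatible when they admit weak topological embeddings into
a same 𝒜-tree. -/
def AncCompat (T₁ : PreTree α V) (T₂ : PreTree α W) : Prop :=
  ∃ (U : Type) (T : PreTree α U), T.IsATree ∧ (∃ f, IsWTE T₁ T f) ∧ (∃ g, IsWTE T₂ T g)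

/-- `m` is the most recent common ancestor of `x` and `y` in `T`. -/
def IsMRCA (T : PreTree α V) (x y m : V) : Prop :=
  T.path m x ∧ T.path m y ∧ ∀ n, T.path n x → T.path n y → T.path n m

/-- Local compatibility: condition (C1) on pairs of common labels and condition (C2)
on triples of common labels. -/
def LocallyCompatible (T₁ : PreTree α V) (T₂ : PreTree α W) : Prop :=
  (∀ (a b : α) (x₁ y₁ : V) (x₂ y₂ : W),
      T₁.label x₁ = some a → T₁.label y₁ = some b →
      T₂.label x₂ = some a → T₂.label y₂ = some b →
      (T₁.path x₁ y₁ ↔ T₂.path x₂ y₂)) ∧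
  (∀ (a b c : α) (va₁ vb₁ vc₁ m₁ m₁' : V) (va₂ vb₂ vc₂ m₂ m₂' : W),
      T₁.label va₁ = some a → T₁.label vb₁ = some b → T₁.label vc₁ = some c →
      T₂.label va₂ = some a → T₂.label vb₂ = some b → T₂.label vc₂ = some c →
      IsMRCA T₁ vb₁ vc₁ m₁ → IsMRCA T₁ va₁ vb₁ m₁' →
      IsMRCA T₂ va₂ vb₂ m₂ → IsMRCA T₂ vb₂ vc₂ m₂' →
      T₁.pathNT m₁ m₁' → ¬ T₂.pathNT m₂ m₂')

/-- `T` ancestrally displays `S`. -/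
def Displays (T : PreTree α W) (S : PreTree α V) : Prop :=
  S.labelSet ⊆ T.labelSet ∧
  (∀ (a b : α) (x y : V) (x' y' : W),
      S.label x = some a → S.label y = some b →
      T.label x' = some a → T.label y' = some b →
      (S.path x y ↔ T.path x' y')) ∧
  S.clusterRep ⊆ (T.restrict S.labelSet).clusterRep

/-- An unlabeled elementary node. -/
def ElemUnlab (T : PreTree α V) (v : V) : Prop := T.label v = none ∧ T.IsElementary v

/-- The semi-labeled tree obtained from `S` by removing its unlabeled elementary nodes and
replacing by single arcs the maximal paths all of whose intermediate nodes are unlabeled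
and elementary. -/
def contract (S : PreTree α V) : PreTree α V where
  nodes := {v | v ∈ S.nodes ∧ ¬ ElemUnlab S v}
  arc u v := (u ∈ S.nodes ∧ ¬ ElemUnlab S u) ∧ (v ∈ S.nodes ∧ ¬ ElemUnlab S v) ∧
    ∃ l : List V, List.Chain' S.arc (u :: (l ++ [v])) ∧ ∀ m ∈ l, ElemUnlab S m
  label := S.label

/-- `X` is the smallest member of the family `R` containing the label `a`. -/
def SmallestContaining (R : Set (Set α)) (a : α) (X : Set α) : Prop :=
  X ∈ R ∧ a ∈ X ∧ ∀ Y ∈ R, a ∈ Y → X ⊆ Y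

/-- `m_{ℓ,Y}`: the number of nodes of `T` whose cluster is `Y`. -/
noncomputable def mcount (T : PreTree α V) (Y : Set α) : ℕ :=
  {v | v ∈ T.nodes ∧ T.cluster v = Y}.ncard

/-- `𝒞 = 𝒞_𝒜(T₁) ∪ 𝒞_𝒜(T₂)`. -/
def joinC (T₁ : PreTree α V) (T₂ : PreTree α W) : Set (Set α) :=
  T₁.clusterRep ∪ T₂.clusterRep

/-- `n_Y = max (m_{1,Y}, m_{2,Y})`. -/
noncomputable def joinN (T₁ : PreTree α V) (T₂ : PreTree α W) (Y : Set α) : ℕ :=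
  max (mcount T₁ Y) (mcount T₂ Y)

open Classical in
/-- The join `T_{1,2}` of two 𝒜-trees with the same label set: nodes are the pairs
`w_{Y,j} = (Y, j)` with `Y ∈ 𝒞` and `1 ≤ j ≤ n_Y`, with the chain arcs `(w_{Y,j}, w_{Y,j-1})`
and the arcs `(w_{Y,1}, w_{Z,n_Z})` for `Z ⊊ Y` maximal in `𝒞`, and `w_{Y,1}` labeled `A`
exactly when `Y = (⋃ {Z ∈ 𝒞 ∣ Z ⊊ Y}) ⊔ {A}`. -/
noncomputable def join (T₁ : PreTree α V) (T₂ : PreTree α W) : PreTree α (Set α × ℕ) where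
  nodes := {p | p.1 ∈ joinC T₁ T₂ ∧ 1 ≤ p.2 ∧ p.2 ≤ joinN T₁ T₂ p.1}
  arc p q := p.1 ∈ joinC T₁ T₂ ∧ q.1 ∈ joinC T₁ T₂ ∧
    ((q.1 = p.1 ∧ p.2 = q.2 + 1 ∧ 1 ≤ q.2 ∧ p.2 ≤ joinN T₁ T₂ p.1) ∨
     (p.2 = 1 ∧ q.1 ⊂ p.1 ∧ q.2 = joinN T₁ T₂ q.1 ∧ 1 ≤ q.2 ∧
       ¬ ∃ Z ∈ joinC T₁ T₂, q.1 ⊂ Z ∧ Z ⊂ p.1))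
  label p :=
    if h : p.2 = 1 ∧ p.1 ∈ joinC T₁ T₂ ∧
        ∃ a : α, a ∉ ⋃₀ {Z ∈ joinC T₁ T₂ | Z ⊂ p.1} ∧
          p.1 = (⋃₀ {Z ∈ joinC T₁ T₂ | Z ⊂ p.1}) ∪ {a}
    then some h.2.2.choose else none

/-- The canonical map `f_ℓ : V(T_ℓ) → V(T_{1,2})`, sending the `i`-th node (from the bottom)
of the chain of nodes of `T` with cluster `Y` to `w_{Y,i}`. -/
noncomputable def joinMap (T : PreTree α V) (v : V) : Set α × ℕ :=
  (T.cluster v, {u | u ∈ T.nodes ∧ T.cluster u = T.cluster v ∧ T.pathNT v u}.ncard + 1)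

end PreTree

/-!
If `u` lies above `v` and `𝒜_T(u) ⊆ 𝒜_T(v)`, every node `m` of the path from `u` to `v` other
than `v` is unlabeled, since its label would have to sit below `v`, hence below `m`. It is also
elementary: any child of `m` carries a label in its subtree (leaves are labeled), that label must
sit below `v`, and two children of `m` with a common descendant coincide. Finally two nodes with
the same cluster are comparable, being ancestors of the node carrying any label of that cluster.
-/

namespace PreTree

variable {α V : Type} {T : PreTree α V}

theorem cluster_subset_of_path {u v : V} (huv : T.path u v) : T.cluster v ⊆ T.cluster u :=
  fun _ ⟨w, hvw, hw⟩ => ⟨w, huv.trans hvw, hw⟩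

namespace IsATree

theorem mem_nodes_of_pathNT (hT : T.IsATree) {v z : V} (h : T.pathNT v z) : z ∈ T.nodes := by
  obtain ⟨c, -, hcz⟩ := Relation.TransGen.tail'_iff.mp h
  exact hT.arc_mem_right hcz

theorem not_pathNT_self (hT : T.IsATree) (v : V) : ¬ T.pathNT v v := fun h => by
  obtain ⟨c, hvc, hcv⟩ := Relation.TransGen.head'_iff.mp h
  exact hT.acyclic hvc hcv

theorem ncard_pathNT_lt_of_arc (hT : T.IsATree) {v c : V} (hvc : T.arc v c) :
    {z | T.pathNT c z}.ncard < {z | T.pathNT v z}.ncard := by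
  refine Set.ncard_lt_ncard ⟨fun z hcz => Relation.TransGen.head hvc hcz, fun hsub => ?_⟩
    (hT.finite_nodes.subset fun _ => hT.mem_nodes_of_pathNT)
  exact hT.not_pathNT_self c (hsub (Relation.TransGen.single hvc))

theorem wellFounded_flip_arc (hT : T.IsATree) : WellFounded (flip T.arc) :=
  Subrelation.wf (fun h => hT.ncard_pathNT_lt_of_arc h)
    (measure fun v => {z | T.pathNT v z}.ncard).wf

theorem cluster_nonempty (hT : T.IsATree) {v : V} (hv : v ∈ T.nodes) :
    (T.cluster v).Nonempty := by
  induction v using hT.wellFounded_flip_arc.induction with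
  | _ v ih =>
    by_cases hchild : ∃ c, T.arc v c
    · obtain ⟨c, hvc⟩ := hchild
      exact (ih c hvc (hT.arc_mem_right hvc)).mono (cluster_subset_of_path (.single hvc))
    · obtain ⟨a, ha⟩ := hT.leaf_labeled v hv (not_exists.mp hchild)
      exact ⟨a, v, .refl, ha⟩

theorem path_of_mem_cluster (hT : T.IsATree) {u w : V} {a : α} (hw : T.label w = some a)
    (ha : a ∈ T.cluster u) : T.path u w := by
  obtain ⟨w', huw', hw'⟩ := ha
  rwa [hT.label_inj hw' hw] at huw'

theorem path_or_path_of_path (hT : T.IsATree) {u v w : V} (hu : T.path u w) (hv : T.path v w) :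
    T.path u v ∨ T.path v u := by
  induction hu using Relation.ReflTransGen.head_induction_on with
  | refl => exact .inr hv
  | head huc _ ih =>
    rcases ih with hcv | hvc
    · exact .inl (.head huc hcv)
    · rcases hvc.cases_tail with rfl | ⟨p, hvp, hpc⟩
      · exact .inl (.single huc)
      · obtain rfl := hT.parent_unique hpc huc
        exact .inr hvp

theorem eq_of_arc_of_arc_of_path (hT : T.IsATree) {u c c' : V} (hc : T.arc u c)
    (hc' : T.arc u c') (hcc' : T.path c c') : c = c' := by
  rcases hcc'.cases_tail with rfl | ⟨p, hcp, hpc'⟩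
  · rfl
  · obtain rfl := hT.parent_unique hpc' hc'
    exact (hT.acyclic hc hcp).elim

theorem eq_of_arc_of_arc_of_path_of_path (hT : T.IsATree) {u c c' w : V} (hc : T.arc u c)
    (hc' : T.arc u c') (hcw : T.path c w) (hc'w : T.path c' w) : c = c' :=
  (hT.path_or_path_of_path hcw hc'w).elim (hT.eq_of_arc_of_arc_of_path hc hc')
    fun h => (hT.eq_of_arc_of_arc_of_path hc' hc h).symm

theorem label_eq_none_of_cluster_subset (hT : T.IsATree) {u c v : V} (huc : T.arc u c)
    (hcv : T.path c v) (hcl : T.cluster u ⊆ T.cluster v) : T.label u = none := by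
  by_contra hne
  obtain ⟨a, ha⟩ := Option.ne_none_iff_exists'.mp hne
  have hvu : T.path v u := hT.path_of_mem_cluster ha (hcl ⟨u, .refl, ha⟩)
  exact hT.acyclic huc (hcv.trans hvu)

theorem isElementary_of_cluster_subset (hT : T.IsATree) {u c v : V} (huc : T.arc u c)
    (hcv : T.path c v) (hcl : T.cluster u ⊆ T.cluster v) : T.IsElementary u := by
  refine ⟨c, huc, fun c' huc' => ?_⟩
  obtain ⟨a, w, hc'w, hw⟩ := hT.cluster_nonempty (hT.arc_mem_right huc')
  have hvw : T.path v w := hT.path_of_mem_cluster hw (hcl ⟨w, .head huc' hc'w, hw⟩)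
  exact (hT.eq_of_arc_of_arc_of_path_of_path huc huc' (hcv.trans hvw) hc'w).symm

theorem exists_isChain_of_path_of_cluster_subset (hT : T.IsATree) {u v : V} (huv : T.path u v)
    (hcl : T.cluster u ⊆ T.cluster v) :
    ∃ l : List V, l.IsChain T.arc ∧ l.head? = some u ∧ l.getLast? = some v ∧
      ∀ m ∈ l.dropLast, T.label m = none ∧ T.IsElementary m := by
  induction huv using Relation.ReflTransGen.head_induction_on with
  | refl => exact ⟨[v], .singleton v, rfl, rfl, by simp⟩
  | @head u c huc hcv ih =>
    obtain ⟨l, hl, hhead, hlast, hinner⟩ :=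
      ih ((cluster_subset_of_path (.single huc)).trans hcl)
    obtain ⟨t, rfl⟩ : ∃ t, l = c :: t := by
      cases l with
      | nil => simp at hhead
      | cons c' t => exact ⟨t, by simp_all⟩
    refine ⟨u :: c :: t, hl.cons_cons huc, rfl, by simpa using hlast, ?_⟩
    rw [List.dropLast_cons_cons]
    rintro m (_ | ⟨_, hm⟩)
    · exact ⟨hT.label_eq_none_of_cluster_subset huc hcv hcl,
        hT.isElementary_of_cluster_subset huc hcv hcl⟩
    · exact hinner m hm

end IsATree

end PreTree

theorem stmt2_general {α V : Type} (T : PreTree α V) (hT : T.IsATree)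
    (x y : V) (hx : x ∈ T.nodes)
    (h : T.cluster x = T.cluster y) :
    ∃ (u v : V) (l : List V),
      ((u = x ∧ v = y) ∨ (u = y ∧ v = x)) ∧
      List.Chain' T.arc l ∧ l.head? = some u ∧ l.getLast? = some v ∧
      ∀ m ∈ l.dropLast, T.label m = none ∧ T.IsElementary m := by
  obtain ⟨a, w, hxw, hw⟩ := hT.cluster_nonempty hx
  have hyw : T.path y w := hT.path_of_mem_cluster hw (h ▸ ⟨w, hxw, hw⟩)
  rcases hT.path_or_path_of_path hxw hyw with hxy | hyx
  · obtain ⟨l, hl⟩ := hT.exists_isChain_of_path_of_cluster_subset hxy h.le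
    exact ⟨x, y, l, .inl ⟨rfl, rfl⟩, hl⟩
  · obtain ⟨l, hl⟩ := hT.exists_isChain_of_path_of_cluster_subset hyx h.ge
    exact ⟨y, x, l, .inr ⟨rfl, rfl⟩, hl⟩

/-- If two different nodes of an 𝒜-tree have the same cluster, then there is a
directed path from one to the other whose origin and intermediate nodes are all unlabeled
and elementary. -/
theorem stmt2 {α V : Type} (T : PreTree α V) (hT : T.IsATree)
    (x y : V) (hx : x ∈ T.nodes) (hy : y ∈ T.nodes) (hxy : x ≠ y)
    (h : T.cluster x = T.cluster y) :
    ∃ (u v : V) (l : List V),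
      ((u = x ∧ v = y) ∨ (u = y ∧ v = x)) ∧
      List.Chain' T.arc l ∧ l.head? = some u ∧ l.getLast? = some v ∧
      ∀ m ∈ l.dropLast, T.label m = none ∧ T.IsElementary m :=
  stmt2_general T hT x y hx h
end

section
/- Let T₁ and T₂ be 𝒜-trees and let T̄₁ = T₁|(𝒜(T₁) ∩ 𝒜(T₂)) and T̄₂ = T₂|(𝒜(T₁) ∩ 𝒜(T₂)). If T₁ and T₂ are ancestrally compatible, then the set of labels of the leaves of T̄₁ equals the set of labels of the leaves of T̄₂, i.e., ℒ(T̄₁) = ℒ(T̄₂). -/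
namespace PreTree

variable {α V W : Type}

/-- Characterization of the leaf labels of a restriction. -/
lemma mem_restrict_leafLabels (T : PreTree α V) (hT : T.IsATree) (X : Set α) (a : α) :
    a ∈ (T.restrict X).leafLabels ↔
      a ∈ X ∧ ∃ v, T.label v = some a ∧
        ∀ b ∈ X, b ≠ a → ∀ u, T.label u = some b → ¬ T.path v u := by
  constructor
  · rintro ⟨v, ⟨hvmem, hleaf⟩, hl⟩
    simp only [restrict] at hl
    split_ifs at hl with hc
    · obtain ⟨a', ha'X, ha'⟩ := hc
      have haa : a' = a := Option.some.inj (ha'.symm.trans hl)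
      subst haa
      refine ⟨ha'X, v, hl, ?_⟩
      intro b hbX hba u hu hpath
      rcases (Relation.ReflTransGen.cases_head hpath) with rfl | ⟨w, hvw, hwu⟩
      · exact hba (Option.some.inj (hu.symm.trans hl))
      · exact hleaf w ⟨hvw, ⟨a', ⟨v, Relation.ReflTransGen.refl, hl⟩, ha'X⟩,
          ⟨b, ⟨u, hwu, hu⟩, hbX⟩⟩
  · rintro ⟨haX, v, hv, hno⟩
    refine ⟨v, ⟨⟨hT.label_mem hv, ⟨a, ⟨v, Relation.ReflTransGen.refl, hv⟩, haX⟩⟩, ?_⟩, ?_⟩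
    · rintro w ⟨harc, _, ⟨b, ⟨u, hwu, hu⟩, hbX⟩⟩
      by_cases hba : b = a
      · subst hba
        have huv : u = v := hT.label_inj hu hv
        exact hT.acyclic harc (huv ▸ hwu)
      · exact hno b hbX hba u hu (Relation.ReflTransGen.head harc hwu)
    · simp only [restrict]
      rw [if_pos ⟨a, haX, hv⟩]
      exact hv

/-- Condition (C1) extracted from ancestral compatibility. -/
lemma ancCompat_path_iff {T₁ : PreTree α V} {T₂ : PreTree α W}
    (h₁ : T₁.IsATree) (h₂ : T₂.IsATree) (h : AncCompat T₁ T₂)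
    (a b : α) (x₁ y₁ : V) (x₂ y₂ : W)
    (hx₁ : T₁.label x₁ = some a) (hy₁ : T₁.label y₁ = some b)
    (hx₂ : T₂.label x₂ = some a) (hy₂ : T₂.label y₂ = some b) :
    T₁.path x₁ y₁ ↔ T₂.path x₂ y₂ := by
  obtain ⟨U, T, hT, ⟨f, hf⟩, ⟨g, hg⟩⟩ := h
  have hfx : T.label (f x₁) = some a := hf.2.2.1 x₁ a hx₁
  have hfy : T.label (f y₁) = some b := hf.2.2.1 y₁ b hy₁
  have hgx : T.label (g x₂) = some a := hg.2.2.1 x₂ a hx₂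
  have hgy : T.label (g y₂) = some b := hg.2.2.1 y₂ b hy₂
  have efx : f x₁ = g x₂ := hT.label_inj hfx hgx
  have efy : f y₁ = g y₂ := hT.label_inj hfy hgy
  rw [hf.2.2.2 x₁ (h₁.label_mem hx₁) y₁ (h₁.label_mem hy₁), efx, efy,
    ← hg.2.2.2 x₂ (h₂.label_mem hx₂) y₂ (h₂.label_mem hy₂)]

end PreTree

/-- If two 𝒜-trees are ancestrally compatible, then the leaf-label sets of
their restrictions to the common label set coincide. -/
theorem stmt12 {α V W : Type} (T₁ : PreTree α V) (T₂ : PreTree α W)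
    (h₁ : T₁.IsATree) (h₂ : T₂.IsATree)
    (h : PreTree.AncCompat T₁ T₂) :
    (T₁.restrict (T₁.labelSet ∩ T₂.labelSet)).leafLabels =
      (T₂.restrict (T₁.labelSet ∩ T₂.labelSet)).leafLabels := by
  set X := T₁.labelSet ∩ T₂.labelSet with hX
  ext a
  rw [PreTree.mem_restrict_leafLabels T₁ h₁, PreTree.mem_restrict_leafLabels T₂ h₂]
  have C1 := PreTree.ancCompat_path_iff h₁ h₂ h
  constructor
  · rintro ⟨haX, v₁, hv₁, hno⟩
    obtain ⟨v₂, hv₂⟩ := haX.2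
    refine ⟨haX, v₂, hv₂, ?_⟩
    intro b hbX hba u₂ hu₂ hp₂
    obtain ⟨u₁, hu₁⟩ := hbX.1
    exact hno b hbX hba u₁ hu₁ ((C1 a b v₁ u₁ v₂ u₂ hv₁ hu₁ hv₂ hu₂).mpr hp₂)
  · rintro ⟨haX, v₂, hv₂, hno⟩
    obtain ⟨v₁, hv₁⟩ := haX.1
    refine ⟨haX, v₁, hv₁, ?_⟩
    intro b hbX hba u₁ hu₁ hp₁
    obtain ⟨u₂, hu₂⟩ := hbX.2
    exact hno b hbX hba u₂ hu₂ ((C1 a b v₁ u₁ v₂ u₂ hv₁ hu₁ hv₂ hu₂).mp hp₁)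
end
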